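/- Let F(z₁, z₂, w₁, w₂) be a polynomial over a field of characteristic zero divisible by (z₁−z₂)^α (w₁−w₂)^β (z₁−w₁)^γ (z₁−w₂)^γ (z₂−w₁)^γ (z₂−w₂)^γ. Then the polynomial obtained by applying ∂^γ/∂w₁^γ and ∂^γ/∂w₂^γ to F and then setting w₁ = z₁ and w₂ = z₂ is divisible by (z₁ − z₂)^{α + β + 2γ}. -/
import Mathlib

open MvPolynomial

variable {K : Type} [Field K] [CharZero K]



lemma pd_iter_add {i : Fin 4} (n : ℕ) (a b : MvPolynomial (Fin 4) K) :
    (fun g => pderiv i g)^[n] (a + b)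
      = (fun g => pderiv i g)^[n] a + (fun g => pderiv i g)^[n] b := by
  induction n generalizing a b with
  | zero => simp
  | succ n ih =>
    simp only [Function.iterate_succ_apply, map_add]
    exact ih _ _

lemma pd_iter_nsmul {i : Fin 4} (n c : ℕ) (a : MvPolynomial (Fin 4) K) :
    (fun g => pderiv i g)^[n] (c • a) = c • (fun g => pderiv i g)^[n] a := by
  induction n generalizing a with
  | zero => simp
  | succ n ih =>
    simp only [Function.iterate_succ_apply, map_nsmul]
    exact ih _

lemma pd_iter_mul_left {i : Fin 4} (n : ℕ) {A : MvPolynomial (Fin 4) K}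
    (hA : pderiv i A = 0) (H : MvPolynomial (Fin 4) K) :
    (fun g => pderiv i g)^[n] (A * H) = A * (fun g => pderiv i g)^[n] H := by
  induction n generalizing H with
  | zero => simp
  | succ n ih =>
    simp only [Function.iterate_succ_apply, pderiv_mul, hA, zero_mul, zero_add]
    exact ih _

lemma pd_dvd_iter {i : Fin 4} {f : MvPolynomial (Fin 4) K} (k : ℕ) :
    ∀ (m : ℕ) (G : MvPolynomial (Fin 4) K), k ≤ m → f ^ m ∣ G →
      f ^ (m - k) ∣ (fun g => pderiv i g)^[k] G := by
  induction k with
  | zero => intro m G _ h; simpa using h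
  | succ k ih =>
    intro m G hkm hdvd
    obtain ⟨m', rfl⟩ : ∃ m', m = m' + 1 := ⟨m - 1, by omega⟩
    obtain ⟨Q, rfl⟩ := hdvd
    rw [Function.iterate_succ_apply]
    have h1 : pderiv i (f ^ (m' + 1) * Q)
        = f ^ m' * (((m' + 1 : ℕ) : MvPolynomial (Fin 4) K) * pderiv i f * Q
            + f * pderiv i Q) := by
      rw [pderiv_mul, pderiv_pow]
      simp only [Nat.add_sub_cancel]
      push_cast
      ring
    rw [h1]
    have : m' + 1 - (k + 1) = m' - k := by omega
    rw [this]
    exact ih m' _ (by omega) ⟨_, rfl⟩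

lemma pd_key {i : Fin 4} (S : MvPolynomial (Fin 4) K →ₐ[K] MvPolynomial (Fin 4) K)
    {f : MvPolynomial (Fin 4) K} (hf : pderiv i f = 1) (hSf : S f = 0) :
    ∀ (n : ℕ) (H : MvPolynomial (Fin 4) K),
      S ((fun g => pderiv i g)^[n] (f ^ n * H)) = Nat.factorial n • S H := by
  intro n
  induction n with
  | zero => intro H; simp
  | succ n ih =>
    intro H
    rw [Function.iterate_succ_apply]
    have h1 : pderiv i (f ^ (n + 1) * H)
        = (n + 1 : ℕ) • (f ^ n * H) + f ^ (n + 1) * pderiv i H := by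
      rw [pderiv_mul, pderiv_pow, hf, nsmul_eq_mul]
      simp only [Nat.add_sub_cancel]
      ring
    rw [h1, pd_iter_add, pd_iter_nsmul, map_add, map_nsmul, ih]
    have h2 : S ((fun g => pderiv i g)^[n] (f ^ (n + 1) * pderiv i H)) = 0 := by
      obtain ⟨W, hW⟩ := pd_dvd_iter (i := i) n (n + 1) (f ^ (n + 1) * pderiv i H)
        (by omega) ⟨_, rfl⟩
      rw [Nat.add_sub_cancel_left, pow_one] at hW
      rw [hW, map_mul, hSf, zero_mul]
    rw [h2, add_zero, smul_smul, Nat.factorial_succ]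



lemma pd_aeval_comm {i : Fin 4} (σf : Fin 4 → MvPolynomial (Fin 4) K)
    (hσ : ∀ j, pderiv i (σf j) = if j = i then 1 else 0)
    (G : MvPolynomial (Fin 4) K) :
    pderiv i (aeval σf G) = aeval σf (pderiv i G) := by
  induction G using MvPolynomial.induction_on with
  | C a => simp
  | add p q hp hq => simp only [map_add, hp, hq]
  | mul_X p n ih =>
    simp only [map_mul, aeval_X, pderiv_mul, pderiv_X, map_add, ih, hσ, Pi.single_apply]
    split_ifs <;> simp

lemma pd_iter_aeval_comm {i : Fin 4} (σf : Fin 4 → MvPolynomial (Fin 4) K)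
    (hσ : ∀ j, pderiv i (σf j) = if j = i then 1 else 0)
    (n : ℕ) (G : MvPolynomial (Fin 4) K) :
    aeval σf ((fun g => pderiv i g)^[n] G)
      = (fun g => pderiv i g)^[n] (aeval σf G) := by
  induction n generalizing G with
  | zero => simp
  | succ n ih =>
    rw [Function.iterate_succ_apply, Function.iterate_succ_apply, ih,
      pd_aeval_comm σf hσ]



/-- Let `F(z₁,z₂,w₁,w₂)` be divisible by
`(z₁−z₂)^α (w₁−w₂)^β (z₁−w₁)^γ (z₁−w₂)^γ (z₂−w₁)^γ (z₂−w₂)^γ`.  Then applying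
`∂^γ/∂w₁^γ` and `∂^γ/∂w₂^γ` and setting `w₁ = z₁`, `w₂ = z₂` yields a
polynomial divisible by `(z₁ − z₂)^{α+β+2γ}`.  Here `X 0 = z₁`, `X 1 = z₂`,
`X 2 = w₁`, `X 3 = w₂`. -/
theorem linking_diagonal_divisibility
    {K : Type} [Field K] [CharZero K]
    (P : MvPolynomial (Fin 4) K) (α β γ : ℕ)
    (hdiv : (X 0 - X 1) ^ α * (X 2 - X 3) ^ β *
        (X 0 - X 2) ^ γ * (X 0 - X 3) ^ γ * (X 1 - X 2) ^ γ * (X 1 - X 3) ^ γ ∣ P) :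
    (X 0 - X 1) ^ (α + β + 2 * γ) ∣
      (aeval (fun j : Fin 4 =>
          if j = 2 then (X 0 : MvPolynomial (Fin 4) K)
          else if j = 3 then X 1 else X j))
        ((fun g => pderiv 2 g)^[γ] ((fun g => pderiv 3 g)^[γ] P)) := by
  classical
  obtain ⟨Q, hQ⟩ := hdiv
  set σfull : Fin 4 → MvPolynomial (Fin 4) K := fun j =>
    if j = 2 then X 0 else if j = 3 then X 1 else X j with hσfull
  set σ2 : Fin 4 → MvPolynomial (Fin 4) K := fun j =>
    if j = 3 then X 1 else X j with hσ2
  set σ1 : Fin 4 → MvPolynomial (Fin 4) K := fun j =>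
    if j = 2 then X 0 else X j with hσ1
  -- decomposition of the full substitution
  have hcomp : ∀ p : MvPolynomial (Fin 4) K,
      aeval σfull p = aeval σ1 (aeval σ2 p) := by
    intro p
    have : (aeval σfull : MvPolynomial (Fin 4) K →ₐ[K] MvPolynomial (Fin 4) K)
        = (aeval σ1).comp (aeval σ2) := by
      apply algHom_ext
      intro j
      fin_cases j <;> simp [hσfull, hσ1, hσ2]
    rw [this, AlgHom.comp_apply]
  -- commutation hypothesis for σ2 and pderiv 2
  have hσ2comm : ∀ j : Fin 4, pderiv (2 : Fin 4) (σ2 j)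
      = if j = 2 then 1 else 0 := by
    intro j
    fin_cases j <;> simp [hσ2]
  -- first variable elimination (w₂ = X 3 ↦ X 1)
  set A : MvPolynomial (Fin 4) K :=
    (X 0 - X 1) ^ α * (X 0 - X 2) ^ γ * (X 1 - X 2) ^ γ with hA
  set H1 : MvPolynomial (Fin 4) K :=
    (X 2 - X 3) ^ β * ((X 0 - X 3) ^ γ * ((-1) ^ γ * Q)) with hH1
  have hP : P = A * ((X 3 - X 1) ^ γ * H1) := by
    have hs : (X 1 - X 3 : MvPolynomial (Fin 4) K) ^ γ
        = (-1) ^ γ * (X 3 - X 1) ^ γ := by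
      rw [← neg_sub (X 3 : MvPolynomial (Fin 4) K) (X 1), neg_pow]
    rw [hQ, hA, hH1, hs]
    ring
  have hA3 : pderiv (3 : Fin 4) A = 0 := by
    simp [hA, pderiv_mul, pderiv_pow]
  have hf3 : pderiv (3 : Fin 4) ((X 3 : MvPolynomial (Fin 4) K) - X 1) = 1 := by
    simp
  have hS2f : aeval σ2 ((X 3 : MvPolynomial (Fin 4) K) - X 1) = 0 := by
    simp [hσ2]
  have e1 : aeval σ2 ((fun g => pderiv (3 : Fin 4) g)^[γ] P)
      = Nat.factorial γ •
        (A * ((X 2 - X 1) ^ β * ((X 0 - X 1) ^ γ * ((-1) ^ γ * aeval σ2 Q)))) := by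
    rw [hP, pd_iter_mul_left γ hA3, map_mul, pd_key (aeval σ2) hf3 hS2f γ H1,
      mul_smul_comm]
    congr 1
    have hS2A : aeval σ2 A = A := by
      simp [hA, hσ2]
    have hS2H1 : aeval σ2 H1
        = (X 2 - X 1) ^ β * ((X 0 - X 1) ^ γ * ((-1) ^ γ * aeval σ2 Q)) := by
      simp [hH1, hσ2]
    rw [hS2A, hS2H1]
  -- second variable elimination (w₁ = X 2 ↦ X 0)
  set Q2 : MvPolynomial (Fin 4) K := aeval σ2 Q with hQ2
  set B : MvPolynomial (Fin 4) K := (X 0 - X 1) ^ α * (X 0 - X 1) ^ γ with hB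
  set H2 : MvPolynomial (Fin 4) K :=
    (X 1 - X 2) ^ γ * ((X 2 - X 1) ^ β * ((-1) ^ γ * ((-1) ^ γ * Q2))) with hH2
  have e2 : A * ((X 2 - X 1) ^ β * ((X 0 - X 1) ^ γ * ((-1) ^ γ * Q2)))
      = B * ((X 2 - X 0) ^ γ * H2) := by
    have hs : (X 0 - X 2 : MvPolynomial (Fin 4) K) ^ γ
        = (-1) ^ γ * (X 2 - X 0) ^ γ := by
      rw [← neg_sub (X 2 : MvPolynomial (Fin 4) K) (X 0), neg_pow]
    rw [hA, hB, hH2, hs]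
    ring
  have hB2 : pderiv (2 : Fin 4) B = 0 := by
    simp [hB, pderiv_mul, pderiv_pow]
  have hf2 : pderiv (2 : Fin 4) ((X 2 : MvPolynomial (Fin 4) K) - X 0) = 1 := by
    simp
  have hS1f : aeval σ1 ((X 2 : MvPolynomial (Fin 4) K) - X 0) = 0 := by
    simp [hσ1]
  have e3 : aeval σ1 ((fun g => pderiv (2 : Fin 4) g)^[γ] (B * ((X 2 - X 0) ^ γ * H2)))
      = Nat.factorial γ •
        (B * ((X 1 - X 0) ^ γ * ((X 0 - X 1) ^ β *
          ((-1) ^ γ * ((-1) ^ γ * aeval σ1 Q2))))) := by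
    rw [pd_iter_mul_left γ hB2, map_mul, pd_key (aeval σ1) hf2 hS1f γ H2,
      mul_smul_comm]
    congr 1
    have hS1B : aeval σ1 B = B := by
      simp [hB, hσ1]
    have hS1H2 : aeval σ1 H2
        = (X 1 - X 0) ^ γ * ((X 0 - X 1) ^ β *
            ((-1) ^ γ * ((-1) ^ γ * aeval σ1 Q2))) := by
      simp [hH2, hσ1]
    rw [hS1B, hS1H2]
  -- assemble
  rw [hcomp, pd_iter_aeval_comm σ2 hσ2comm, e1, pd_iter_nsmul, map_nsmul, e2, e3]
  refine ⟨((Nat.factorial γ : MvPolynomial (Fin 4) K)) *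
      (Nat.factorial γ : MvPolynomial (Fin 4) K) *
      ((-1) ^ γ * ((-1) ^ γ * ((-1) ^ γ * aeval σ1 Q2))), ?_⟩
  have hs : (X 1 - X 0 : MvPolynomial (Fin 4) K) ^ γ
      = (-1) ^ γ * (X 0 - X 1) ^ γ := by
    rw [← neg_sub (X 0 : MvPolynomial (Fin 4) K) (X 1), neg_pow]
  rw [nsmul_eq_mul, nsmul_eq_mul, hB, hs]
  ring
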